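/- (Strict negativity of the tightened dual SOCP on the SOCP-inexact region: dp''(w, δ) < 0.) Let w ∈ ℝ^W and let δ ∈ ℝ^N with δ_j > 0 for every j. Assume dp'(w) = 0 and that every dual feasible (μ, λ) with D_w(μ, λ) = 0 has λ_{q,j} = 0 for at least one index j (i.e., w ∈ W̃_d). Then every dual feasible (μ, λ) satisfying the tightening constraint λ_{q,j} ≥ δ_j for all j has D_w(μ, λ) < 0; consequently, if the supremum dp''(w, δ) of D_w over the tightened dual feasible set is attained, then dp''(w, δ) < 0. -/

import Mathlib

open Matrix

/-- Euclidean norm on `Fin k → ℝ`. -/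
noncomputable def enorm' {k : ℕ} (y : Fin k → ℝ) : ℝ := Real.sqrt (∑ i, (y i) ^ 2)

/-- Euclidean inner product on `Fin k → ℝ`. -/
def dotp {k : ℕ} (a b : Fin k → ℝ) : ℝ := ∑ i, a i * b i

/-- The constant data of the SOCP `FP'(w)` (and of its dual `DP'(w)`). -/
structure SOCPData (n m s N W : ℕ) where
  Af : Matrix (Fin m) (Fin n) ℝ
  Bf : Matrix (Fin m) (Fin W) ℝ
  As : Matrix (Fin s) (Fin n) ℝ
  gf : Fin m → ℝ
  gs : Fin s → ℝ
  Ay : Fin N → Matrix (Fin 3) (Fin n) ℝ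
  bY : Fin N → Fin 3 → ℝ
  cq : Fin N → Fin n → ℝ
  gq : Fin N → ℝ

/-- Feasibility of `(x, y, z_s, z_q)` for the SOCP `FP'(w)`. -/
def FPfeas {n m s N W : ℕ} (d : SOCPData n m s N W) (w : Fin W → ℝ) (x : Fin n → ℝ)
    (y : Fin N → Fin 3 → ℝ) (zs : Fin s → ℝ) (zq : Fin N → ℝ) : Prop :=
  (∀ i, 0 ≤ zs i) ∧ (∀ j, 0 ≤ zq j) ∧
  d.Af.mulVec x + d.Bf.mulVec w + d.gf = 0 ∧
  (∀ i, d.As.mulVec x i + d.gs i ≤ zs i) ∧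
  (∀ j, y j = (d.Ay j).mulVec x + d.bY j) ∧
  (∀ j, enorm' (y j) ≤ dotp (d.cq j) x + d.gq j + zq j)

/-- Dual feasibility of `(μ_f, μ_y, λ_s, λ_q)` for `DP'(w)`. -/
def DualFeas {n m s N W : ℕ} (d : SOCPData n m s N W) (muf : Fin m → ℝ)
    (muy : Fin N → Fin 3 → ℝ) (ls : Fin s → ℝ) (lq : Fin N → ℝ) : Prop :=
  (∀ i, 0 ≤ ls i ∧ ls i ≤ 1) ∧ (∀ j, 0 ≤ lq j ∧ lq j ≤ 1) ∧
  (d.Af.transpose.mulVec muf + d.As.transpose.mulVec ls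
    = (∑ j, (d.Ay j).transpose.mulVec (muy j)) + ∑ j, lq j • d.cq j) ∧
  (∀ j, enorm' (muy j) ≤ lq j)

/-- The dual objective `D_w(μ, λ)`. -/
def Dobj {n m s N W : ℕ} (d : SOCPData n m s N W) (w : Fin W → ℝ) (muf : Fin m → ℝ)
    (muy : Fin N → Fin 3 → ℝ) (ls : Fin s → ℝ) (lq : Fin N → ℝ) : ℝ :=
  dotp muf (d.Bf.mulVec w + d.gf) + dotp ls d.gs
    - (∑ j, dotp (muy j) (d.bY j)) - ∑ j, lq j * d.gq j

/-- `fp'(w)`: the optimal (infimum) value of the primal SOCP `FP'(w)`, in `EReal`. -/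
noncomputable def fpVal {n m s N W : ℕ} (d : SOCPData n m s N W) (w : Fin W → ℝ) : EReal :=
  sInf {v : EReal | ∃ x y zs zq, FPfeas d w x y zs zq ∧
    v = (((∑ i, zs i) + ∑ j, zq j : ℝ) : EReal)}

/-- `dp'(w)`: the optimal (supremum) value of the dual SOCP `DP'(w)`, in `EReal`. -/
noncomputable def dpVal {n m s N W : ℕ} (d : SOCPData n m s N W) (w : Fin W → ℝ) : EReal :=
  sSup {v : EReal | ∃ muf muy ls lq, DualFeas d muf muy ls lq ∧
    v = ((Dobj d w muf muy ls lq : ℝ) : EReal)}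

/-- The set of values of the tightened dual SOCP `DP''(w, δ)`. -/
noncomputable def dppSet {n m s N W : ℕ} (d : SOCPData n m s N W) (w : Fin W → ℝ)
    (δ : Fin N → ℝ) : Set EReal :=
  {v : EReal | ∃ muf muy ls lq, DualFeas d muf muy ls lq ∧ (∀ j, δ j ≤ lq j) ∧
    v = ((Dobj d w muf muy ls lq : ℝ) : EReal)}

/-! Every dual feasible value is at most `dp'(w) = 0`, and a point attaining `0` is dual optimal,
so it has some `λ_{q,j} = 0`; a point with `λ_q ≥ δ > 0` therefore has a strictly negative value. -/

section

variable {n m s N W : ℕ} {d : SOCPData n m s N W} {w : Fin W → ℝ} {muf : Fin m → ℝ}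
  {muy : Fin N → Fin 3 → ℝ} {ls : Fin s → ℝ} {lq : Fin N → ℝ}

theorem DualFeas.Dobj_le_dpVal (h : DualFeas d muf muy ls lq) :
    (Dobj d w muf muy ls lq : EReal) ≤ dpVal d w :=
  le_sSup ⟨muf, muy, ls, lq, h, rfl⟩

theorem DualFeas.Dobj_neg_of_forall_pos (hdp : dpVal d w = 0)
    (hWd : ∀ muf muy ls lq, DualFeas d muf muy ls lq →
      Dobj d w muf muy ls lq = 0 → ∃ j, lq j = 0)
    (h : DualFeas d muf muy ls lq) (hlq : ∀ j, 0 < lq j) :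
    Dobj d w muf muy ls lq < 0 := by
  have hle : Dobj d w muf muy ls lq ≤ 0 := by
    exact_mod_cast hdp ▸ h.Dobj_le_dpVal (w := w)
  refine hle.lt_of_ne fun hzero => ?_
  obtain ⟨j, hj⟩ := hWd muf muy ls lq h hzero
  exact (hlq j).ne' hj

end

theorem stmt_15_general {n m s N W : ℕ} (d : SOCPData n m s N W) (w : Fin W → ℝ)
    (δ : Fin N → ℝ) (hδ : ∀ j, 0 < δ j)
    (hdp : dpVal d w = 0)
    (hWd : ∀ muf muy ls lq, DualFeas d muf muy ls lq →
      Dobj d w muf muy ls lq = 0 → ∃ j, lq j = 0) :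
    (∀ muf muy ls lq, DualFeas d muf muy ls lq → (∀ j, δ j ≤ lq j) →
      Dobj d w muf muy ls lq < 0) ∧
    (sSup (dppSet d w δ) ∈ dppSet d w δ → sSup (dppSet d w δ) < (0 : EReal)) := by
  have tightened_neg : ∀ muf muy ls lq, DualFeas d muf muy ls lq → (∀ j, δ j ≤ lq j) →
      Dobj d w muf muy ls lq < 0 := fun _ _ _ _ h hge =>
    h.Dobj_neg_of_forall_pos hdp hWd fun j => (hδ j).trans_le (hge j)
  refine ⟨tightened_neg, fun hmem => ?_⟩
  obtain ⟨muf, muy, ls, lq, h, hge, hval⟩ := hmem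
  rw [hval]
  exact_mod_cast tightened_neg muf muy ls lq h hge

/-- Strict negativity of the tightened dual SOCP on the SOCP-inexact region:
if `dp'(w) = 0` and every dual optimal solution has some `λ_{q,j} = 0`, then
every dual feasible point with `λ_q ≥ δ > 0` has `D_w < 0`; consequently, if the
supremum `dp''(w, δ)` is attained then `dp''(w, δ) < 0`. -/
theorem stmt_15 {n m s N W : ℕ} (hn : 0 < n) (hm : 0 < m) (hs : 0 < s) (hN : 0 < N)
    (hW : 0 < W) (d : SOCPData n m s N W) (w : Fin W → ℝ)
    (δ : Fin N → ℝ) (hδ : ∀ j, 0 < δ j)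
    (hdp : dpVal d w = 0)
    (hWd : ∀ muf muy ls lq, DualFeas d muf muy ls lq →
      Dobj d w muf muy ls lq = 0 → ∃ j, lq j = 0) :
    (∀ muf muy ls lq, DualFeas d muf muy ls lq → (∀ j, δ j ≤ lq j) →
      Dobj d w muf muy ls lq < 0) ∧
    (sSup (dppSet d w δ) ∈ dppSet d w δ → sSup (dppSet d w δ) < (0 : EReal)) :=
  stmt_15_general d w δ hδ hdp hWd
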